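/- Let P' be a set of pairwise edge-intersecting paths in a Helly B_k-EPG representation of a graph G. Then the intersection of all paths of P' contains at least one relevant edge (an extremity edge or a bend edge of one of the paths in P'). -/

import Mathlib

/-- A grid edge: a lattice point together with a direction; `true` means the
horizontal edge from `pt` to `pt + (1,0)`, `false` the vertical edge from `pt`
to `pt + (0,1)`. -/
structure GridEdge where
  pt : ℤ × ℤ
  horiz : Bool
deriving DecidableEq

/-- The two endpoints of a grid edge. -/
def GridEdge.endpoints (e : GridEdge) : Finset (ℤ × ℤ) :=
  {e.pt, if e.horiz then (e.pt.1 + 1, e.pt.2) else (e.pt.1, e.pt.2 + 1)}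

/-- Two distinct grid edges are adjacent when they share an endpoint. -/
def GridEdge.adj (e f : GridEdge) : Prop :=
  e ≠ f ∧ (e.endpoints ∩ f.endpoints).Nonempty

/-- A simple path in the integer grid, given by its sequence of edges:
consecutive edges are adjacent, all edges are distinct, and
non-consecutive edges are non-adjacent. -/
structure GridPath where
  edges : List GridEdge
  nonempty : edges ≠ []
  nodup : edges.Nodup
  chain : edges.Chain' GridEdge.adj
  simple : ∀ i j : ℕ, i + 1 < j → ∀ (hi : i < edges.length) (hj : j < edges.length),
    ¬ GridEdge.adj (edges.get ⟨i, hi⟩) (edges.get ⟨j, hj⟩)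

/-- The number of bends of a grid path: consecutive pairs of edges with
different directions. -/
def GridPath.bends (P : GridPath) : ℕ :=
  ((P.edges.zip P.edges.tail).filter fun q => q.1.horiz != q.2.horiz).length

/-- Two paths (edge-)intersect when they share a grid edge. -/
def GridPath.Inter (P Q : GridPath) : Prop :=
  ∃ e : GridEdge, e ∈ P.edges ∧ e ∈ Q.edges

/-- A relevant edge of a path: an extremity (first or last) edge or a bend edge. -/
def GridPath.IsRelevant (P : GridPath) (e : GridEdge) : Prop :=
  P.edges.head? = some e ∨ P.edges.getLast? = some e ∨
    ∃ q ∈ P.edges.zip P.edges.tail, q.1.horiz ≠ q.2.horiz ∧ (e = q.1 ∨ e = q.2)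

/-- An EPG representation of a graph: vertices are assigned grid paths, and two
distinct vertices are adjacent iff their paths share a grid edge. -/
def IsEPGRep {V : Type*} (G : SimpleGraph V) (P : V → GridPath) : Prop :=
  ∀ u v : V, u ≠ v → (G.Adj u v ↔ (P u).Inter (P v))

/-- The Helly property for a family of grid paths: every pairwise
edge-intersecting subfamily has a grid edge common to all its members. -/
def HellyEPG {ι : Type*} (P : ι → GridPath) : Prop :=
  ∀ T : Set ι, (∀ i ∈ T, ∀ j ∈ T, (P i).Inter (P j)) →
    ∃ e : GridEdge, ∀ i ∈ T, e ∈ (P i).edges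

/-- The set of maximal cliques of a graph. -/
def maxCliques {V : Type*} (G : SimpleGraph V) : Set (Set V) :=
  {s | G.IsClique s ∧ ∀ t : Set V, G.IsClique t → s ⊆ t → s = t}

theorem aux_mem_zip_tail {α : Type*} (L : List α) (i : ℕ) (h : i + 1 < L.length) :
    (L.get ⟨i, by omega⟩, L.get ⟨i+1, h⟩) ∈ L.zip L.tail := by
  have hlen : (L.zip L.tail).length = L.length - 1 := by
    simp [List.length_zip, List.length_tail]
  have hi : i < (L.zip L.tail).length := by omega
  have h2 : (L.zip L.tail)[i] = (L[i], L[i+1]) := by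
    rw [List.getElem_zip, List.getElem_tail]
  have h3 := List.getElem_mem hi
  rw [h2] at h3
  simpa using h3

theorem aux_get_congr {α : Type*} (L : List α) (m n : ℕ) (hm : m < L.length)
    (hn : n < L.length) (h : m = n) : L.get ⟨m, hm⟩ = L.get ⟨n, hn⟩ := by
  congr 1; exact Fin.ext h

theorem aux_through_pt (p : ℤ × ℤ) (e : GridEdge) (hp : p ∈ e.endpoints) :
    e.pt = p ∨ (e.horiz = true ∧ e.pt = (p.1 - 1, p.2)) ∨ (e.horiz = false ∧ e.pt = (p.1, p.2 - 1)) := by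
  unfold GridEdge.endpoints at hp
  rcases e with ⟨⟨x,y⟩, b⟩
  cases b <;> simp_all [Finset.mem_insert, Prod.ext_iff] <;> omega

theorem aux_three_edges (p : ℤ × ℤ) (a b c : GridEdge) (ha : p ∈ a.endpoints)
    (hb : p ∈ b.endpoints) (hc : p ∈ c.endpoints)
    (h1 : a.horiz = b.horiz) (h2 : b.horiz = c.horiz) : a = b ∨ a = c ∨ b = c := by
  have Ha := aux_through_pt p a ha
  have Hb := aux_through_pt p b hb
  have Hc := aux_through_pt p c hc
  rcases a with ⟨pa, ba⟩; rcases b with ⟨pb, bb⟩; rcases c with ⟨pc, bc⟩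
  simp only at h1 h2 Ha Hb Hc
  subst h1; subst h2
  simp only [GridEdge.mk.injEq]
  rcases Ha with h|⟨h,h'⟩|⟨h,h'⟩ <;> rcases Hb with g|⟨g,g'⟩|⟨g,g'⟩ <;>
    rcases Hc with f|⟨f,f'⟩|⟨f,f'⟩ <;> simp_all

theorem aux_two_endpoints (e : GridEdge) (x y z : ℤ × ℤ) (hx : x ∈ e.endpoints)
    (hy : y ∈ e.endpoints) (hz : z ∈ e.endpoints) : x = y ∨ x = z ∨ y = z := by
  unfold GridEdge.endpoints at *
  simp only [Finset.mem_insert, Finset.mem_singleton] at hx hy hz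
  rcases hx with hx|hx <;> rcases hy with hy|hy <;> rcases hz with hz|hz <;>
    subst_vars <;> tauto

theorem aux_chain_adj (Q : GridPath) (i : ℕ) (h : i + 1 < Q.edges.length) :
    GridEdge.adj (Q.edges.get ⟨i, by omega⟩) (Q.edges.get ⟨i+1, h⟩) := by
  have hc := Q.chain
  replace hc := List.isChain_iff_getElem.mp hc
  exact hc i (by omega)

theorem aux_ne_of_ne_idx (Q : GridPath) (i j : ℕ) (hi : i < Q.edges.length)
    (hj : j < Q.edges.length) (hij : i ≠ j) :
    Q.edges.get ⟨i, hi⟩ ≠ Q.edges.get ⟨j, hj⟩ := by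
  intro h
  have := List.nodup_iff_injective_get.mp Q.nodup h
  simp [Fin.ext_iff] at this
  omega

theorem aux_head (Q : GridPath) (n : ℕ) (hn : n < Q.edges.length) (h0 : n = 0) :
    Q.edges.head? = some (Q.edges.get ⟨n, hn⟩) := by
  subst h0
  rw [List.head?_eq_head Q.nonempty]
  simp [List.head_eq_getElem]

theorem aux_last (Q : GridPath) (n : ℕ) (hn : n < Q.edges.length)
    (h0 : n = Q.edges.length - 1) :
    Q.edges.getLast? = some (Q.edges.get ⟨n, hn⟩) := by
  subst h0
  rw [List.getLast?_eq_getLast Q.nonempty]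
  simp [List.getLast_eq_getElem]

/-- In a Helly `B_k`-EPG representation, every nonempty set of pairwise
intersecting paths has a common grid edge that is a relevant edge of one of
the paths. -/
theorem pairwise_inter_common_relevant {V : Type*} (G : SimpleGraph V) (k : ℕ)
    (P : V → GridPath) (hrep : IsEPGRep G P) (hb : ∀ v : V, (P v).bends ≤ k)
    (hH : HellyEPG P) (S : Set V) (hne : S.Nonempty)
    (hpw : ∀ u ∈ S, ∀ v ∈ S, (P u).Inter (P v)) :
    ∃ e : GridEdge, (∀ v ∈ S, e ∈ (P v).edges) ∧ ∃ v ∈ S, (P v).IsRelevant e := by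
  classical
  obtain ⟨e₀, he₀⟩ := hH S hpw
  obtain ⟨v₀, hv₀⟩ := hne
  have hex : ∃ n, ∃ h : n < (P v₀).edges.length,
      ∀ u ∈ S, (P v₀).edges.get ⟨n, h⟩ ∈ (P u).edges := by
    obtain ⟨n, hn⟩ := List.mem_iff_get.mp (he₀ v₀ hv₀)
    exact ⟨n.1, n.2, by rw [hn]; exact fun u hu => he₀ u hu⟩
  obtain ⟨hi, hcom⟩ := Nat.find_spec hex
  by_cases h0 : Nat.find hex = 0
  · exact ⟨_, hcom, v₀, hv₀, Or.inl (aux_head (P v₀) _ hi h0)⟩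
  · have hi1lt : Nat.find hex - 1 < (P v₀).edges.length := by omega
    have hadjef : GridEdge.adj ((P v₀).edges.get ⟨Nat.find hex - 1, hi1lt⟩)
        ((P v₀).edges.get ⟨Nat.find hex, hi⟩) := by
      have h := aux_chain_adj (P v₀) (Nat.find hex - 1) (by omega)
      have hg := aux_get_congr (P v₀).edges (Nat.find hex - 1 + 1) (Nat.find hex)
        (by omega) hi (by omega)
      rwa [hg] at h
    by_cases hbend : ((P v₀).edges.get ⟨Nat.find hex - 1, hi1lt⟩).horiz
        = ((P v₀).edges.get ⟨Nat.find hex, hi⟩).horiz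
    · -- same direction: the previous edge f is not common; use a path missing it
      have hfnot : ∃ u ∈ S, (P v₀).edges.get ⟨Nat.find hex - 1, hi1lt⟩ ∉ (P u).edges := by
        by_contra hcon
        push_neg at hcon
        exact Nat.find_min hex (by omega) ⟨hi1lt, fun u hu => hcon u hu⟩
      obtain ⟨u, hu, hfu⟩ := hfnot
      have heu : (P v₀).edges.get ⟨Nat.find hex, hi⟩ ∈ (P u).edges := hcom u hu
      obtain ⟨p, hp⟩ := hadjef.2
      rw [Finset.mem_inter] at hp
      obtain ⟨hpf, hpe⟩ := hp
      obtain ⟨⟨j, hj⟩, hje⟩ := List.mem_iff_get.mp heu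
      by_cases hj0 : j = 0
      · exact ⟨_, hcom, u, hu, Or.inl (by rw [← hje]; exact aux_head (P u) j hj hj0)⟩
      · by_cases hjl : j = (P u).edges.length - 1
        · exact ⟨_, hcom, u, hu, Or.inr (Or.inl (by rw [← hje]; exact aux_last (P u) j hj hjl))⟩
        · -- interior: both neighbours of e in P u exist
          have hjm1 : j - 1 < (P u).edges.length := by omega
          have hjp1 : j + 1 < (P u).edges.length := by omega
          have hadj1 : GridEdge.adj ((P u).edges.get ⟨j-1, hjm1⟩)
              ((P v₀).edges.get ⟨Nat.find hex, hi⟩) := by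
            have h := aux_chain_adj (P u) (j-1) (by omega)
            have hg := aux_get_congr (P u).edges (j - 1 + 1) j (by omega) hj (by omega)
            rwa [hg, hje] at h
          have hadj2 : GridEdge.adj ((P v₀).edges.get ⟨Nat.find hex, hi⟩)
              ((P u).edges.get ⟨j+1, hjp1⟩) := by
            have h := aux_chain_adj (P u) j hjp1
            rwa [hje] at h
          have hnadj := (P u).simple (j-1) (j+1) (by omega) hjm1 hjp1
          obtain ⟨a, ha⟩ := hadj1.2
          rw [Finset.mem_inter] at ha
          obtain ⟨a1, a2⟩ := ha
          obtain ⟨b, hbb⟩ := hadj2.2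
          rw [Finset.mem_inter] at hbb
          obtain ⟨b1, b2⟩ := hbb
          have hg12 := aux_ne_of_ne_idx (P u) (j-1) (j+1) hjm1 hjp1 (by omega)
          have hab : a ≠ b := fun hEq =>
            hnadj ⟨hg12, ⟨a, Finset.mem_inter.mpr ⟨a1, hEq ▸ b2⟩⟩⟩
          have key : ∀ g : GridEdge, g ∈ (P u).edges →
              g ≠ (P v₀).edges.get ⟨Nat.find hex, hi⟩ → p ∈ g.endpoints →
              g.horiz ≠ ((P v₀).edges.get ⟨Nat.find hex, hi⟩).horiz := by
            intro g hgM hge hpg hgh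
            rcases aux_three_edges p g ((P v₀).edges.get ⟨Nat.find hex, hi⟩)
                ((P v₀).edges.get ⟨Nat.find hex - 1, hi1lt⟩) hpg hpe hpf hgh hbend.symm with
              h|h|h
            · exact hge h
            · exact hfu (h ▸ hgM)
            · exact hadjef.1 h.symm
          have hpab : p = a ∨ p = b := by
            rcases aux_two_endpoints _ p a b hpe a2 b1 with h|h|h
            · exact Or.inl h
            · exact Or.inr h
            · exact absurd h hab
          rcases hpab with hpa | hpb
          · -- the preceding edge bends at e
            have hg1e : (P u).edges.get ⟨j-1, hjm1⟩ ≠ (P v₀).edges.get ⟨Nat.find hex, hi⟩ := by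
              have h := aux_ne_of_ne_idx (P u) (j-1) j hjm1 hj (by omega)
              rwa [hje] at h
            have hbp := key _ (List.get_mem (P u).edges ⟨j-1, hjm1⟩) hg1e (hpa ▸ a1)
            refine ⟨_, hcom, u, hu, Or.inr (Or.inr ⟨((P u).edges.get ⟨j-1, hjm1⟩,
              (P v₀).edges.get ⟨Nat.find hex, hi⟩), ?_, hbp, Or.inr rfl⟩)⟩
            have hmem := aux_mem_zip_tail (P u).edges (j-1) (by omega)
            have hg := aux_get_congr (P u).edges (j - 1 + 1) j (by omega) hj (by omega)
            rwa [hg, hje] at hmem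
          · -- the following edge bends at e
            have hg2e : (P u).edges.get ⟨j+1, hjp1⟩ ≠ (P v₀).edges.get ⟨Nat.find hex, hi⟩ := by
              have h := aux_ne_of_ne_idx (P u) (j+1) j hjp1 hj (by omega)
              rwa [hje] at h
            have hbp := key _ (List.get_mem (P u).edges ⟨j+1, hjp1⟩) hg2e (hpb ▸ b2)
            refine ⟨_, hcom, u, hu, Or.inr (Or.inr ⟨((P v₀).edges.get ⟨Nat.find hex, hi⟩,
              (P u).edges.get ⟨j+1, hjp1⟩), ?_, Ne.symm hbp, Or.inl rfl⟩)⟩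
            have hmem := aux_mem_zip_tail (P u).edges j hjp1
            rwa [hje] at hmem
    · -- direction change: e is a bend edge of P v₀
      refine ⟨_, hcom, v₀, hv₀, Or.inr (Or.inr ⟨((P v₀).edges.get ⟨Nat.find hex - 1, hi1lt⟩,
        (P v₀).edges.get ⟨Nat.find hex, hi⟩), ?_, hbend, Or.inr rfl⟩)⟩
      have hmem := aux_mem_zip_tail (P v₀).edges (Nat.find hex - 1) (by omega)
      have hg := aux_get_congr (P v₀).edges (Nat.find hex - 1 + 1) (Nat.find hex)
        (by omega) hi (by omega)
      rwa [hg] at hmem
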